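/- Every finite family 𝔉 of frames in general position has a partition 𝒫 into layers of 𝔉; moreover, 𝒫 can be chosen so that it splits as 𝒫 = 𝒫₁ ∪ 𝒫₂ (with 𝒫₁, 𝒫₂ possibly empty) where any two distinct layers belonging to 𝒫₁ are mutually independent and any two distinct layers belonging to 𝒫₂ are mutually independent. -/

import Mathlib

open Set

/-- An axis-aligned rectangle `[l, r] × [b, t]` with `l < r` and `b < t`. -/
structure Rect where
  l : ℝ
  r : ℝ
  b : ℝ
  t : ℝ
  hlr : l < r
  hbt : b < t

noncomputable instance : DecidableEq Rect := Classical.decEq _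

/-- The filling rectangle, as a subset of the plane. -/
def Rect.toSet (R : Rect) : Set (ℝ × ℝ) := Set.Icc R.l R.r ×ˢ Set.Icc R.b R.t

/-- The frame: the boundary (topological frontier) of the filling rectangle. -/
def Rect.frame (R : Rect) : Set (ℝ × ℝ) := frontier R.toSet

/-- A family of frames is in general position. -/
def GenPos (𝔉 : Finset Rect) : Prop :=
  ∀ F ∈ 𝔉, ∀ F' ∈ 𝔉, F ≠ F' →
    [F.l, F.r, F'.l, F'.r].Pairwise (· ≠ ·) ∧
    [F.b, F.t, F'.b, F'.t].Pairwise (· ≠ ·)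

/-- The intersection graph of a family of frames. -/
def frameGraph (𝔉 : Finset Rect) : SimpleGraph {F : Rect // F ∈ 𝔉} where
  Adj F F' := F ≠ F' ∧ (F.1.frame ∩ F'.1.frame).Nonempty
  symm := by
    constructor
    intro a b h
    exact ⟨h.1.symm, by rw [Set.inter_comm]; exact h.2⟩
  loopless := by constructor; intro a h; exact h.1 rfl

/-- The intersection of frames `F` and `F'` is rightward-directed. -/
def RightDir (F F' : Rect) : Prop :=
  F.l < F'.l ∧ F'.l < F.r ∧ F.r < F'.r ∧ F.b < F'.b ∧ F'.b < F'.t ∧ F'.t < F.t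

/-- The intersection of frames `F` and `F'` is leftward-directed. -/
def LeftDir (F F' : Rect) : Prop :=
  F'.l < F.l ∧ F.l < F'.r ∧ F'.r < F.r ∧ F.b < F'.b ∧ F'.b < F'.t ∧ F'.t < F.t

/-- The intersection of frames `F` and `F'` is upward-directed. -/
def UpDir (F F' : Rect) : Prop :=
  F.b < F'.b ∧ F'.b < F.t ∧ F.t < F'.t ∧ F.l < F'.l ∧ F'.l < F'.r ∧ F'.r < F.r

/-- The intersection of frames `F` and `F'` is downward-directed. -/
def DownDir (F F' : Rect) : Prop :=
  F'.b < F.b ∧ F.b < F'.t ∧ F'.t < F.t ∧ F.l < F'.l ∧ F'.l < F'.r ∧ F'.r < F.r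

/-- Any two intersecting frames of the family satisfy `P` (in one of the two orders). -/
def IntersectingPairsSatisfy (𝔉 : Finset Rect) (P : Rect → Rect → Prop) : Prop :=
  ∀ F ∈ 𝔉, ∀ F' ∈ 𝔉, F ≠ F' → (F.frame ∩ F'.frame).Nonempty → P F F' ∨ P F' F

def IsRightwardDirected (𝔉 : Finset Rect) : Prop := IntersectingPairsSatisfy 𝔉 RightDir

/-- A directed family of frames. -/
def IsDirectedFamily (𝔉 : Finset Rect) : Prop :=
  IntersectingPairsSatisfy 𝔉 RightDir ∨ IntersectingPairsSatisfy 𝔉 LeftDir ∨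
    IntersectingPairsSatisfy 𝔉 UpDir ∨ IntersectingPairsSatisfy 𝔉 DownDir

/-- `F` is enclosed by `F'`. -/
def Enclosed (F F' : Rect) : Prop :=
  F'.l < F.l ∧ F.r < F'.r ∧ F'.b < F.b ∧ F.t < F'.t

/-- A clean family of frames. -/
def Clean (𝔉 : Finset Rect) : Prop :=
  ¬ ∃ F₁ ∈ 𝔉, ∃ F₂ ∈ 𝔉, ∃ F₃ ∈ 𝔉, F₁ ≠ F₂ ∧
    (Rect.frame F₁ ∩ Rect.frame F₂).Nonempty ∧ Enclosed F₃ F₁ ∧ Enclosed F₃ F₂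

/-- The overlap graph of a family of rectangles: two rectangles are adjacent if they
intersect but neither is a subset of the other. -/
def overlapGraph (𝔉 : Finset Rect) : SimpleGraph {R : Rect // R ∈ 𝔉} where
  Adj R S := (R.1.toSet ∩ S.1.toSet).Nonempty ∧ ¬ R.1.toSet ⊆ S.1.toSet ∧ ¬ S.1.toSet ⊆ R.1.toSet
  symm := by
    constructor
    intro a b h
    exact ⟨by rw [Set.inter_comm]; exact h.1, h.2.2, h.2.1⟩
  loopless := by constructor; intro a h; exact h.2.1 subset_rfl

/-- `L` is a layer of the family `𝔉` of frames. -/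
def IsLayer (𝔉 L : Finset Rect) : Prop :=
  L ⊆ 𝔉 ∧ (L.card = 1 ∨ ∀ F ∈ L, ∃ F' ∈ 𝔉, F' ∉ L ∧
    ¬ (F'.frame ⊆ ⋃ F'' ∈ L, Rect.toSet F'') ∧ (F.frame ∩ F'.frame).Nonempty)

/-- `L` is an `m`-fold layer of `𝔉`. -/
def IsMFoldLayer : ℕ → Finset Rect → Finset Rect → Prop
  | 0, 𝔉, L => L = 𝔉
  | m + 1, 𝔉, L => ∃ L', IsMFoldLayer m 𝔉 L' ∧ IsLayer L' L

/-- Two families of frames are mutually independent: no frame of one intersects a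
frame of the other. -/
def MutuallyIndependent (L L' : Finset Rect) : Prop :=
  ∀ F ∈ L, ∀ F' ∈ L', Rect.frame F ∩ Rect.frame F' = ∅

/-!
Root every connected component of the intersection graph at its frame with the largest right
edge, and let the layers be the sets of frames of one component at a fixed graph distance from
its root. Frames whose distances differ by two or more do not meet, so layers of equal parity are
mutually independent. If a frame `S` at distance `j` were enclosed by a frame `Y` at distance at
least `j + 2`, the point where `S` meets its predecessor `W` would lie in `rect Y`; since the
frame of `W` is connected and misses that of `Y`, `W` would be enclosed by `Y` too, and descending
to the root gives a frame of the component with a larger right edge than the root. Hence a frame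
at distance `i + 1` meets its predecessor `U`, which is external to the layer `i + 1`: the point
where `U` meets its own predecessor, or the top right corner if `U` is the root (by general
position), lies outside every rectangle of that layer.
-/

namespace SimpleGraph

variable {V β : Type*} [Finite V] [LinearOrder β] (G : SimpleGraph V) (f : V → β)

noncomputable def peak (c : G.ConnectedComponent) : V :=
  (c.supp.exists_max_image f c.supp.toFinite c.nonempty_supp).choose

lemma connectedComponentMk_peak (c : G.ConnectedComponent) :
    G.connectedComponentMk (G.peak f c) = c :=
  (c.supp.exists_max_image f c.supp.toFinite c.nonempty_supp).choose_spec.1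

lemma le_peak (v : V) : f v ≤ f (G.peak f (G.connectedComponentMk v)) :=
  let c := G.connectedComponentMk v
  (c.supp.exists_max_image f c.supp.toFinite c.nonempty_supp).choose_spec.2 v rfl

lemma reachable_peak (v : V) : G.Reachable (G.peak f (G.connectedComponentMk v)) v :=
  ConnectedComponent.exact (G.connectedComponentMk_peak f _)

noncomputable def depth (v : V) : ℕ := G.dist (G.peak f (G.connectedComponentMk v)) v

variable {G f}

lemma depth_eq_zero_iff {v : V} : G.depth f v = 0 ↔ G.peak f (G.connectedComponentMk v) = v :=
  (G.reachable_peak f v).dist_eq_zero_iff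

lemma Adj.depth_le {u v : V} (h : G.Adj u v) : G.depth f u ≤ G.depth f v + 1 := by
  have hc : G.connectedComponentMk u = G.connectedComponentMk v :=
    ConnectedComponent.sound h.reachable
  unfold depth
  rw [hc, ← dist_eq_one_iff_adj.mpr h.symm]
  exact h.symm.reachable.dist_triangle_right _

lemma exists_adj_depth_eq {v : V} {i : ℕ} (h : G.depth f v = i + 1) :
    ∃ u, G.Adj u v ∧ G.depth f u = i := by
  obtain ⟨p, hp⟩ := (G.reachable_peak f v).exists_walk_length_eq_dist
  have hnil : ¬ p.Nil := by
    rw [← Walk.length_eq_zero_iff]; unfold depth at h; omega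
  have hadj := p.adj_penultimate hnil
  have hc : G.connectedComponentMk p.penultimate = G.connectedComponentMk v :=
    ConnectedComponent.sound hadj.reachable
  refine ⟨p.penultimate, hadj, le_antisymm ?_ ?_⟩
  · have := G.dist_le p.dropLast
    rw [Walk.length_dropLast] at this
    unfold depth at h ⊢
    rw [hc]
    omega
  · have := hadj.symm.depth_le (f := f)
    omega

end SimpleGraph

namespace Rect

lemma isClosed_toSet (R : Rect) : IsClosed R.toSet := isClosed_Icc.prod isClosed_Icc

lemma interior_toSet (R : Rect) : interior R.toSet = Ioo R.l R.r ×ˢ Ioo R.b R.t := by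
  rw [toSet, interior_prod_eq, interior_Icc, interior_Icc]

lemma frame_eq_toSet_diff_interior (R : Rect) : R.frame = R.toSet \ interior R.toSet :=
  R.isClosed_toSet.frontier_eq

lemma frame_subset_toSet (R : Rect) : R.frame ⊆ R.toSet :=
  R.frame_eq_toSet_diff_interior ▸ sdiff_subset

lemma frame_eq_union (R : Rect) :
    R.frame = Icc R.l R.r ×ˢ {R.b, R.t} ∪ {R.l, R.r} ×ˢ Icc R.b R.t := by
  rw [frame, toSet, frontier_prod_eq, closure_Icc, closure_Icc, frontier_Icc R.hbt.le,
    frontier_Icc R.hlr.le, union_comm]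

lemma lb_mem_frame (R : Rect) : (R.l, R.b) ∈ R.frame := by
  simp [frame_eq_union, R.hlr.le, R.hbt.le]

lemma rt_mem_frame (R : Rect) : (R.r, R.t) ∈ R.frame := by
  simp [frame_eq_union, R.hlr.le, R.hbt.le]

lemma isPreconnected_frame (R : Rect) : IsPreconnected R.frame := by
  have seg : ∀ {s t : Set ℝ}, Convex ℝ s → Convex ℝ t → IsPreconnected (s ×ˢ t) :=
    fun hs ht => (hs.prod ht).isPreconnected
  have hlr := R.hlr.le
  have hbt := R.hbt.le
  have bottom_right : IsPreconnected (Icc R.l R.r ×ˢ {R.b} ∪ {R.r} ×ˢ Icc R.b R.t) :=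
    (seg (convex_Icc _ _) (convex_singleton _)).union (R.r, R.b) (by simp [hlr])
      (by simp [hbt]) (seg (convex_singleton _) (convex_Icc _ _))
  have top_left : IsPreconnected (Icc R.l R.r ×ˢ {R.t} ∪ {R.l} ×ˢ Icc R.b R.t) :=
    (seg (convex_Icc _ _) (convex_singleton _)).union (R.l, R.t) (by simp [hlr])
      (by simp [hbt]) (seg (convex_singleton _) (convex_Icc _ _))
  convert bottom_right.union (R.r, R.t) (by simp [hbt]) (by simp [hlr]) top_left using 1
  ext ⟨x, y⟩
  simp only [frame_eq_union, mem_union, mem_prod, mem_insert_iff, mem_singleton_iff]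
  tauto

end Rect

lemma Enclosed.toSet_subset {F F' : Rect} (h : Enclosed F F') : F.toSet ⊆ F'.toSet := by
  rintro ⟨x, y⟩ ⟨⟨hl, hr⟩, hb, ht⟩
  exact ⟨⟨h.1.le.trans hl, hr.trans h.2.1.le⟩, h.2.2.1.le.trans hb, ht.trans h.2.2.2.le⟩

/-- The frame of `F` is connected and misses the frame of `F'`, so once it meets `rect F'` it
lies in the interior of `rect F'`, and so do two opposite corners of `F`. -/
lemma enclosed_of_frame_inter_eq_empty {F F' : Rect} (hd : F.frame ∩ F'.frame = ∅) {q : ℝ × ℝ}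
    (hqF : q ∈ F.frame) (hqF' : q ∈ F'.toSet) : Enclosed F F' := by
  have hcover : F.frame ⊆ interior F'.toSet ∪ F'.toSetᶜ := by
    intro p hp
    by_cases hpF' : p ∈ F'.toSet
    · refine Or.inl (by_contra fun hpi => ?_)
      exact hd.subset ⟨hp, F'.frame_eq_toSet_diff_interior ▸ ⟨hpF', hpi⟩⟩
    · exact Or.inr hpF'
  have hsub : F.frame ⊆ interior F'.toSet :=
    F.isPreconnected_frame.subset_left_of_subset_union isOpen_interior
      F'.isClosed_toSet.isOpen_compl
      (disjoint_compl_right.mono_left interior_subset) hcover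
      ⟨q, hqF, (hcover hqF).resolve_right (not_not.mpr hqF')⟩
  have hlb := hsub F.lb_mem_frame
  have hrt := hsub F.rt_mem_frame
  rw [F'.interior_toSet] at hlb hrt
  exact ⟨hlb.1.1, hrt.1.2, hlb.2.1, hrt.2.2⟩

lemma GenPos.r_ne {𝔉 : Finset Rect} (hgp : GenPos 𝔉) {F F' : Rect} (hF : F ∈ 𝔉) (hF' : F' ∈ 𝔉)
    (hne : F ≠ F') : F.r ≠ F'.r := by
  have := (hgp F hF F' hF' hne).1
  simp only [List.pairwise_cons, List.mem_cons, List.not_mem_nil, forall_eq_or_imp] at this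
  exact this.2.1.2.1

section Layering

variable {𝔉 : Finset Rect}

open SimpleGraph

local notation "κ" => connectedComponentMk (frameGraph 𝔉)

local notation "δ" => depth (frameGraph 𝔉) (fun F => Rect.r (Subtype.val F))

lemma connectedComponentMk_eq_of_frame_inter_nonempty {F G : 𝔉}
    (h : (F.1.frame ∩ G.1.frame).Nonempty) : κ F = κ G := by
  by_cases hne : F = G
  · rw [hne]
  · exact ConnectedComponent.sound (Adj.reachable ⟨hne, h⟩)

lemma frame_inter_eq_empty_of_depth_add_two_le {F G : 𝔉}
    (h : δ F + 2 ≤ δ G) : F.1.frame ∩ G.1.frame = ∅ := by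
  refine not_nonempty_iff_eq_empty.mp fun hFG => ?_
  have hne : G ≠ F := by rintro rfl; omega
  have := Adj.depth_le (f := fun F : 𝔉 => F.1.r)
    (show (frameGraph 𝔉).Adj G F from ⟨hne, inter_comm F.1.frame _ ▸ hFG⟩)
  omega

lemma not_enclosed_of_depth_add_two_le {F G : 𝔉} (hc : κ F = κ G)
    (h : δ F + 2 ≤ δ G) : ¬ Enclosed F.1 G.1 := by
  induction hF : δ F generalizing F with
  | zero =>
    rw [depth_eq_zero_iff] at hF
    have hGF := (frameGraph 𝔉).le_peak (fun F : 𝔉 => F.1.r) G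
    rw [← hc, hF] at hGF
    exact fun hFG => hGF.not_gt hFG.2.1
  | succ i ih =>
    obtain ⟨W, ⟨-, q, hqW, hqF⟩, hW⟩ := exists_adj_depth_eq hF
    intro hFG
    have hWG : W.1.frame ∩ G.1.frame = ∅ := frame_inter_eq_empty_of_depth_add_two_le (by omega)
    exact ih ((connectedComponentMk_eq_of_frame_inter_nonempty ⟨q, hqW, hqF⟩).trans hc)
      (by omega) hW (enclosed_of_frame_inter_eq_empty hWG hqW
        (hFG.toSet_subset (F.1.frame_subset_toSet hqF)))

open Classical in
noncomputable def frameLayer (F : 𝔉) : Finset Rect :=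
  (Finset.univ.filter fun G : 𝔉 => κ G = κ F ∧ δ G = δ F).map (Function.Embedding.subtype _)

lemma mem_frameLayer {F : 𝔉} {R : Rect} :
    R ∈ frameLayer F ↔ ∃ G : 𝔉, G.1 = R ∧ κ G = κ F ∧ δ G = δ F := by
  simp [frameLayer, and_comm]

lemma coe_mem_frameLayer {F G : 𝔉} : G.1 ∈ frameLayer F ↔ κ G = κ F ∧ δ G = δ F := by
  simp [mem_frameLayer]

lemma not_frame_subset_frameLayer_of_depth_add_one_eq (hgp : GenPos 𝔉) {F G : 𝔉}
    (hc : κ G = κ F) (h : δ G + 1 = δ F) : ¬ G.1.frame ⊆ ⋃ Y ∈ frameLayer F, Rect.toSet Y := by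
  suffices ∃ q ∈ G.1.frame, ∀ Y : 𝔉, κ Y = κ F → δ Y = δ F → q ∉ Y.1.toSet by
    obtain ⟨q, hqG, hq⟩ := this
    intro hsub
    obtain ⟨_, hYL, hqY⟩ := mem_iUnion₂.mp (hsub hqG)
    obtain ⟨Y, rfl, hYc, hYd⟩ := mem_frameLayer.mp hYL
    exact hq Y hYc hYd hqY
  cases hG : δ G with
  | zero =>
    rw [depth_eq_zero_iff] at hG
    refine ⟨(G.1.r, G.1.t), G.1.rt_mem_frame, fun Y hY hYd hGY => ?_⟩
    have hYG : Y ≠ G := by rintro rfl; omega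
    have hle := (frameGraph 𝔉).le_peak (fun F : 𝔉 => F.1.r) Y
    rw [hY, ← hc, hG] at hle
    exact hgp.r_ne Y.2 G.2 (Subtype.coe_injective.ne hYG) (hle.antisymm hGY.1.2)
  | succ i =>
    obtain ⟨S, ⟨-, q, hqS, hqG⟩, hS⟩ := exists_adj_depth_eq hG
    refine ⟨q, hqG, fun Y hY hYd hqY => ?_⟩
    have hSY : δ S + 2 ≤ δ Y := by omega
    have hSc : κ S = κ Y :=
      ((connectedComponentMk_eq_of_frame_inter_nonempty ⟨q, hqS, hqG⟩).trans hc).trans hY.symm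
    exact not_enclosed_of_depth_add_two_le hSc hSY
      (enclosed_of_frame_inter_eq_empty (frame_inter_eq_empty_of_depth_add_two_le hSY) hqS hqY)

lemma isLayer_frameLayer (hgp : GenPos 𝔉) (F : 𝔉) : IsLayer 𝔉 (frameLayer F) := by
  refine ⟨fun R hR => ?_, ?_⟩
  · obtain ⟨G, rfl, -⟩ := mem_frameLayer.mp hR
    exact G.2
  cases hF : δ F with
  | zero =>
    refine Or.inl (Finset.card_eq_one.mpr ⟨F.1, Finset.eq_singleton_iff_unique_mem.mpr
      ⟨coe_mem_frameLayer.mpr ⟨rfl, rfl⟩, fun R hR => ?_⟩⟩)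
    obtain ⟨G, rfl, hGc, hGd⟩ := mem_frameLayer.mp hR
    rw [← depth_eq_zero_iff.mp (hGd.trans hF), ← depth_eq_zero_iff.mp hF, hGc]
  | succ i =>
    refine Or.inr fun R hR => ?_
    obtain ⟨G, rfl, hGc, hGd⟩ := mem_frameLayer.mp hR
    obtain ⟨U, hUG, hU⟩ := exists_adj_depth_eq (hGd.trans hF)
    refine ⟨U.1, U.2, fun hUF => ?_, not_frame_subset_frameLayer_of_depth_add_one_eq hgp
      ((ConnectedComponent.sound hUG.reachable).trans hGc) (by omega),
      inter_comm _ G.1.frame ▸ hUG.2⟩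
    have := (coe_mem_frameLayer.mp hUF).2
    omega

lemma frameLayer_eq_iff {F G : 𝔉} : frameLayer F = frameLayer G ↔ κ F = κ G ∧ δ F = δ G :=
  ⟨fun h => coe_mem_frameLayer.mp (h ▸ coe_mem_frameLayer.mpr ⟨rfl, rfl⟩),
    fun ⟨hc, hd⟩ => Finset.ext fun _ => by simp only [mem_frameLayer, hc, hd]⟩

lemma disjoint_frameLayer {F G : 𝔉} (h : frameLayer F ≠ frameLayer G) :
    Disjoint (frameLayer F) (frameLayer G) := by
  refine Finset.disjoint_left.mpr fun R hRF hRG => h (frameLayer_eq_iff.mpr ?_)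
  obtain ⟨H, rfl, hHF⟩ := mem_frameLayer.mp hRF
  obtain ⟨hHcG, hHdG⟩ := coe_mem_frameLayer.mp hRG
  exact ⟨hHF.1.symm.trans hHcG, hHF.2.symm.trans hHdG⟩

lemma mutuallyIndependent_frameLayer {F G : 𝔉} (hpar : δ F % 2 = δ G % 2)
    (h : frameLayer F ≠ frameLayer G) : MutuallyIndependent (frameLayer F) (frameLayer G) := by
  intro A hA B hB
  obtain ⟨A, rfl, hAc, hAd⟩ := mem_frameLayer.mp hA
  obtain ⟨B, rfl, hBc, hBd⟩ := mem_frameLayer.mp hB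
  by_cases hc : κ F = κ G
  · have hd : δ F ≠ δ G := fun hd => h (frameLayer_eq_iff.mpr ⟨hc, hd⟩)
    rcases hd.lt_or_gt with hlt | hlt
    · exact frame_inter_eq_empty_of_depth_add_two_le (by omega)
    · rw [inter_comm]
      exact frame_inter_eq_empty_of_depth_add_two_le (by omega)
  · refine not_nonempty_iff_eq_empty.mp fun hAB => hc ?_
    exact hAc.symm.trans ((connectedComponentMk_eq_of_frame_inter_nonempty hAB).trans hBc)

lemma biUnion_image_frameLayer :
    ((Finset.univ : Finset 𝔉).image frameLayer).biUnion id = 𝔉 := by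
  ext R
  simp only [Finset.mem_biUnion, Finset.mem_image, Finset.mem_univ, true_and, id,
    exists_exists_eq_and]
  refine ⟨fun ⟨F, hR⟩ => ?_, fun hR => ⟨⟨R, hR⟩, coe_mem_frameLayer.mpr ⟨rfl, rfl⟩⟩⟩
  obtain ⟨G, rfl, -⟩ := mem_frameLayer.mp hR
  exact G.2

variable (𝔉) in
noncomputable def layersOfParity (k : ℕ) : Finset (Finset Rect) :=
  (Finset.univ.filter fun F : 𝔉 => δ F % 2 = k).image frameLayer

lemma layersOfParity_zero_union_one :
    layersOfParity 𝔉 0 ∪ layersOfParity 𝔉 1 = (Finset.univ : Finset 𝔉).image frameLayer := by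
  rw [layersOfParity, layersOfParity, ← Finset.image_union, ← Finset.filter_or,
    Finset.filter_true_of_mem fun F _ => Nat.mod_two_eq_zero_or_one _]

lemma disjoint_layersOfParity_zero_one : Disjoint (layersOfParity 𝔉 0) (layersOfParity 𝔉 1) := by
  refine Finset.disjoint_left.mpr fun L hL hL' => ?_
  simp only [layersOfParity, Finset.mem_image, Finset.mem_filter, Finset.mem_univ, true_and]
    at hL hL'
  obtain ⟨F, hF, rfl⟩ := hL
  obtain ⟨G, hG, hGF⟩ := hL'
  have := (frameLayer_eq_iff.mp hGF).2
  omega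

lemma mutuallyIndependent_of_mem_layersOfParity {k : ℕ} {L L' : Finset Rect}
    (hL : L ∈ layersOfParity 𝔉 k) (hL' : L' ∈ layersOfParity 𝔉 k) (hne : L ≠ L') :
    MutuallyIndependent L L' := by
  simp only [layersOfParity, Finset.mem_image, Finset.mem_filter, Finset.mem_univ, true_and]
    at hL hL'
  obtain ⟨F, hF, rfl⟩ := hL
  obtain ⟨G, hG, rfl⟩ := hL'
  exact mutuallyIndependent_frameLayer (hF.trans hG.symm) hne

end Layering

/-- Every family of frames in general position has a partition into layers which
splits into two subclasses each consisting of mutually independent layers. -/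
theorem stmt16 (𝔉 : Finset Rect) (hgp : GenPos 𝔉) :
    ∃ P₁ P₂ : Finset (Finset Rect),
      Disjoint P₁ P₂ ∧
      (∀ L ∈ P₁ ∪ P₂, L.Nonempty ∧ IsLayer 𝔉 L) ∧
      (∀ L ∈ P₁ ∪ P₂, ∀ L' ∈ P₁ ∪ P₂, L ≠ L' → Disjoint L L') ∧
      (P₁ ∪ P₂).biUnion id = 𝔉 ∧
      (∀ L ∈ P₁, ∀ L' ∈ P₁, L ≠ L' → MutuallyIndependent L L') ∧
      (∀ L ∈ P₂, ∀ L' ∈ P₂, L ≠ L' → MutuallyIndependent L L') := by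
  refine ⟨layersOfParity 𝔉 0, layersOfParity 𝔉 1, disjoint_layersOfParity_zero_one, ?_, ?_,
    ?_, fun L hL L' hL' => mutuallyIndependent_of_mem_layersOfParity hL hL',
    fun L hL L' hL' => mutuallyIndependent_of_mem_layersOfParity hL hL'⟩ <;>
    rw [layersOfParity_zero_union_one]
  · simp only [Finset.forall_mem_image, Finset.mem_univ, true_implies]
    exact fun F => ⟨⟨F.1, coe_mem_frameLayer.mpr ⟨rfl, rfl⟩⟩, isLayer_frameLayer hgp F⟩
  · simp only [Finset.forall_mem_image, Finset.mem_univ, true_implies]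
    exact fun F G => disjoint_frameLayer
  · exact biUnion_image_frameLayer
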